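/- For every word s ∈ S⁺, the set AP(s) of admissible partitions of s is a lattice: if u and u′ are admissible partitions of s, then both their meet u∧u′ and their join u∨u′, taken in the lattice of all partitions of the index set {1,…,l(s)}, are again admissible partitions of s. -/

import Mathlib

/-!
Admissibility is a condition on pairs: if `a` and `c` lie in one block, so does every position of
`w` strictly between them. Meets are intersections, so the condition passes to them pointwise.
The join is the equivalence closure of the union, and the condition survives that closure: if a
position `j` of `w` lies strictly between the ends of a chain `a = x₀, x₁, …, xₙ = c` of related
points, then it is one of the `xᵢ` or lies strictly between two consecutive ones, and cutting that
link at `j` gives a chain from `a` to `j`.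
-/

/-- The two-letter alphabet `{z, w}`. -/
inductive Letter | z | w
deriving DecidableEq

/-- Words: elements of the free monoid `S = FS({z,w})`. -/
abbrev Word := List Letter

/-- The letter of `s` at position `j` (defaulting to `z`). -/
def letterAt (s : Word) (j : ℕ) : Letter := s.getD j Letter.z

/-- A partition of the index set `{0,…,n−1}` of the word `s` (a setoid on `Fin n`)
is admissible if no block contains a letter `w` that is inner with respect to
another block: whenever a position `j` with letter `w` lies strictly between two
positions `i < j < k` of the same block, `j` belongs to that block. -/
def AdmissibleSetoid (s : Word) (r : Setoid (Fin s.length)) : Prop :=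
  ∀ i j k : Fin s.length, i < j → j < k → letterAt s j = Letter.w →
    r i k → r i j

open Set

section Admissible

variable {α : Type*} [LinearOrder α] (W : Set α)

def IsAdmissible (R : α → α → Prop) : Prop :=
  ∀ ⦃a c j⦄, R a c → j ∈ W → j ∈ uIoo a c → R a j

lemma Set.mem_uIoo_or_mem_uIoo_of_ne {a b c j : α} (hj : j ∈ uIoo a c) (hjb : j ≠ b) :
    j ∈ uIoo a b ∨ j ∈ uIoo b c := by
  simp only [uIoo, mem_Ioo, inf_lt_iff, lt_sup_iff] at hj ⊢
  grind

lemma Setoid.isAdmissible_iff (r : Setoid α) :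
    IsAdmissible W r ↔ ∀ i j k, i < j → j < k → j ∈ W → r i k → r i j := by
  refine ⟨fun h i j k hij hjk hj hik => h hik hj (mem_uIoo_of_lt hij hjk), ?_⟩
  intro h a c j hac hj hjac
  rcases le_total a c with hle | hle
  · rw [uIoo_of_le hle] at hjac
    exact h a j c hjac.1 hjac.2 hj hac
  · rw [uIoo_of_ge hle] at hjac
    exact r.trans hac (h c j a hjac.1 hjac.2 hj (r.symm hac))

variable {W}

lemma IsAdmissible.eqvGen {R : α → α → Prop} (hR : IsAdmissible W R) :
    IsAdmissible W (Relation.EqvGen R) := by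
  intro a c j hac
  induction hac generalizing j with
  | rel a c hac => exact fun hj hjac => .rel _ _ (hR hac hj hjac)
  | refl a => exact fun _ hja => by simp at hja
  | symm a c hac ih =>
    exact fun hj hjac => .trans _ _ _ (.symm _ _ hac) (ih hj (uIoo_comm a c ▸ hjac))
  | trans a b c hab hbc ihab ihbc =>
    intro hj hjac
    rcases eq_or_ne j b with rfl | hjb
    · exact hab
    rcases mem_uIoo_or_mem_uIoo_of_ne hjac hjb with hj' | hj'
    · exact ihab hj hj'
    · exact .trans _ _ _ hab (ihbc hj hj')

lemma isAdmissible_sInf {S : Set (Setoid α)} (hS : ∀ r ∈ S, IsAdmissible W r) :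
    IsAdmissible W ⇑(sInf S) :=
  fun _ _ _ hac hj hjac r hr => hS r hr (hac r hr) hj hjac

lemma isAdmissible_sSup {S : Set (Setoid α)} (hS : ∀ r ∈ S, IsAdmissible W r) :
    IsAdmissible W ⇑(sSup S) := by
  rw [Setoid.sSup_eq_eqvGen]
  refine IsAdmissible.eqvGen ?_
  rintro a c j ⟨r, hr, hac⟩ hj hjac
  exact ⟨r, hr, hS r hr hac hj hjac⟩

end Admissible

theorem admissible_lattice_general (s : Word)
    (r r' : Setoid (Fin s.length))
    (hr : AdmissibleSetoid s r) (hr' : AdmissibleSetoid s r') :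
    AdmissibleSetoid s (r ⊓ r') ∧ AdmissibleSetoid s (r ⊔ r') := by
  let W := {j : Fin s.length | letterAt s j = Letter.w}
  have admissibleSetoid_iff (q : Setoid (Fin s.length)) :
      AdmissibleSetoid s q ↔ IsAdmissible W q :=
    (q.isAdmissible_iff W).symm
  have hpair : ∀ q ∈ ({r, r'} : Set (Setoid (Fin s.length))), IsAdmissible W q := by
    simpa only [mem_insert_iff, mem_singleton_iff, forall_eq_or_imp, forall_eq,
      admissibleSetoid_iff] using And.intro hr hr'
  rw [admissibleSetoid_iff, admissibleSetoid_iff, ← sInf_pair, ← sSup_pair]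
  exact ⟨isAdmissible_sInf hpair, isAdmissible_sSup hpair⟩

/-- the admissible partitions of a word form a lattice: meets and joins
(taken in the lattice of all partitions of the index set, i.e. of setoids with the
refinement order) of admissible partitions are admissible. -/
theorem admissible_lattice (s : Word) (hs : s ≠ [])
    (r r' : Setoid (Fin s.length))
    (hr : AdmissibleSetoid s r) (hr' : AdmissibleSetoid s r') :
    AdmissibleSetoid s (r ⊓ r') ∧ AdmissibleSetoid s (r ⊔ r') :=
  admissible_lattice_general s r r' hr hr'
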